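/- arXiv:2010.02987 — 3 statements merged into one kernel-verified Lean document; each statement's English description precedes it below -/
import Mathlib

section
/- Under the contiguous semantics, a matched trend is exactly a contiguous infix (consecutive run) of the event stream, hence a stream of n events admits at most n(n+1)/2 trends matched by any pattern under the contiguous semantics. -/
attribute [local instance] Classical.propDecidable

/-- A trend under the contiguous semantics over a stream `l` (of strictly increasing
timestamps): a nonempty subsequence of `l` containing every stream event whose timestamp
lies strictly between the trend's start and end timestamps. -/
def ContiguousTrend (l tr : List ℕ) : Prop :=
  tr ≠ [] ∧ tr.Sublist l ∧ ∀ e ∈ l, tr.head! < e → e < tr.getLast! → e ∈ tr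

/-!
On a strictly increasing stream a contiguous trend is the restriction of the stream to the
interval between the trend's first and last timestamps, and restricting a sorted list to an
interval cuts off a prefix and a suffix, so the trend is an infix. A nonempty infix is a
nonempty prefix of a tail, and the tails of a stream of length `n` have lengths
`n, n - 1, …, 1`, so there are at most `n(n+1)/2` of them.
-/

namespace List

variable {α : Type*}

theorem head!_eq_head [Inhabited α] {l : List α} (h : l ≠ []) : l.head! = l.head h := by
  cases l with
  | nil => contradiction
  | cons a t => rfl

theorem getLast!_eq_getLast [Inhabited α] {l : List α} (h : l ≠ []) :
    l.getLast! = l.getLast h := by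
  simp [getLast?_eq_some_getLast h]

theorem filter_isPrefix_of_pairwise {p : α → Bool} {l : List α}
    (h : l.Pairwise fun a b => p b → p a) : l.filter p <+: l := by
  induction l with
  | nil => simp
  | cons a t ih =>
    obtain ⟨ha, ht⟩ := pairwise_cons.mp h
    by_cases hpa : p a
    · simpa [filter_cons_of_pos hpa] using ih ht
    · rw [filter_cons_of_neg hpa, filter_eq_nil_iff.mpr fun b hb hpb => hpa (ha b hb hpb)]
      exact nil_prefix

theorem filter_isSuffix_of_pairwise {p : α → Bool} {l : List α}
    (h : l.Pairwise fun a b => p a → p b) : l.filter p <:+ l := by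
  induction l with
  | nil => simp
  | cons a t ih =>
    obtain ⟨ha, ht⟩ := pairwise_cons.mp h
    by_cases hpa : p a
    · rw [filter_eq_self.mpr]
      intro b hb
      rcases mem_cons.mp hb with rfl | hb
      exacts [hpa, ha b hb hpa]
    · rw [filter_cons_of_neg hpa]
      exact (ih ht).trans (suffix_cons a t)

theorem Pairwise.filter_Icc_isInfix [Preorder α] [DecidableLE α] {l : List α}
    (h : l.Pairwise (· ≤ ·)) (lo hi : α) : l.filter (· ∈ Set.Icc lo hi) <:+: l := by
  have hfilter : l.filter (· ∈ Set.Icc lo hi) = (l.filter (lo ≤ ·)).filter (· ≤ hi) := by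
    simp [filter_filter, Set.mem_Icc, Bool.and_comm]
  rw [hfilter]
  refine infix_iff_prefix_suffix.mpr ⟨_, filter_isPrefix_of_pairwise ?_,
    filter_isSuffix_of_pairwise (h.imp fun hab => by simpa using (le_trans · hab))⟩
  exact (h.sublist filter_sublist).imp fun hab => by simpa using hab.trans

def nonemptyInfixes (l : List α) : List (List α) :=
  l.tails.flatMap fun t => t.inits.tail

theorem mem_nonemptyInfixes_of_isInfix {s l : List α} (hs : s ≠ []) (h : s <:+: l) :
    s ∈ l.nonemptyInfixes := by
  obtain ⟨t, hst, htl⟩ := infix_iff_prefix_suffix.mp h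
  refine mem_flatMap.mpr ⟨t, (mem_tails _ _).mpr htl, ?_⟩
  have hsinits := (mem_inits _ _).mpr hst
  cases t with
  | nil => exact absurd (prefix_nil.mp hst) hs
  | cons a t => exact (mem_cons.mp hsinits).resolve_left hs

theorem length_nonemptyInfixes (l : List α) :
    l.nonemptyInfixes.length * 2 = l.length * (l.length + 1) := by
  induction l with
  | nil => rfl
  | cons a t ih =>
    simp only [nonemptyInfixes, tails_cons, flatMap_cons, length_append, length_tail,
      length_inits, add_tsub_cancel_right] at ih ⊢
    rw [add_mul, ih, length_cons]
    ring

end List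

open List

theorem ContiguousTrend.eq_filter_Icc {l tr : List ℕ} (hs : l.Pairwise (· < ·))
    (h : ContiguousTrend l tr) : tr = l.filter (· ∈ Set.Icc tr.head! tr.getLast!) := by
  obtain ⟨hne, hsub, hbetween⟩ := h
  have htr : tr.Pairwise (· < ·) := hs.sublist hsub
  have hhead : tr.head! = tr.head hne := head!_eq_head hne
  have hlast : tr.getLast! = tr.getLast hne := getLast!_eq_getLast hne
  refine htr.eq_of_mem_iff (hs.sublist filter_sublist) fun e => ?_
  simp only [mem_filter, Set.mem_Icc, decide_eq_true_eq]
  constructor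
  · intro he
    exact ⟨hsub.subset he, hhead ▸ (htr.imp le_of_lt).rel_head he,
      hlast ▸ (htr.imp le_of_lt).rel_getLast he⟩
  · rintro ⟨hel, hlo, hhi⟩
    rcases hlo.eq_or_lt with rfl | hlo
    · exact hhead ▸ head_mem hne
    rcases hhi.eq_or_lt with rfl | hhi
    · exact hlast ▸ getLast_mem hne
    exact hbetween e hel hlo hhi

theorem ContiguousTrend.isInfix {l tr : List ℕ} (hs : l.Pairwise (· < ·))
    (h : ContiguousTrend l tr) : tr <:+: l := by
  rw [h.eq_filter_Icc hs]
  exact (hs.imp le_of_lt).filter_Icc_isInfix _ _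

/-- Under the contiguous semantics, every matched trend is a contiguous infix of the
stream, hence a stream of `n` events admits at most `n(n+1)/2` contiguous trends. -/
theorem stmt5 (l : List ℕ) (hs : l.Pairwise (· < ·)) :
    (∀ tr, ContiguousTrend l tr → tr <:+: l) ∧
    (l.sublists.filter (fun tr => decide (ContiguousTrend l tr))).length ≤
      l.length * (l.length + 1) / 2 := by
  refine ⟨fun tr h => h.isInfix hs, ?_⟩
  have hnodup : (l.sublists.filter (fun tr => decide (ContiguousTrend l tr))).Nodup :=
    (nodup_sublists.mpr hs.nodup).filter _
  have hsubset : l.sublists.filter (fun tr => decide (ContiguousTrend l tr)) ⊆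
      l.nonemptyInfixes := fun tr htr => by
    have htrend := of_decide_eq_true (mem_filter.mp htr).2
    exact mem_nonemptyInfixes_of_isInfix htrend.1 (htrend.isInfix hs)
  rw [Nat.le_div_iff_mul_le two_pos, ← length_nonemptyInfixes]
  exact Nat.mul_le_mul_right 2 (subperm_of_subset hnodup hsubset).length_le
end

section
/- Correctness of type-grained counting (skip-till-any-match, no adjacency predicates): after processing a stream event by event with the updates e.count = Σ_{E' ∈ predTypes(E)} E'.count (+1 if E is the start type) and E.count += e.count, the counter end(P).count equals the number of finished trends matched by the pattern P in the stream. -/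
attribute [local instance] Classical.propDecidable

/-- One step of the type-grained trend count algorithm (skip-till-any-match, no
adjacency predicates): upon an event of type `E`,
`e.count = Σ_{E' ∈ predTypes E} E'.count (+1 if E is the start type)` and
`E.count += e.count`. -/
def stepType {T : Type*} [DecidableEq T] (pred : T → Finset T) (startT : T)
    (counts : T → ℕ) (E : T) : T → ℕ :=
  let ec := (∑ E' ∈ pred E, counts E') + (if E = startT then 1 else 0)
  Function.update counts E (counts E + ec)

/-- A finished trend matched by the pattern `P`: a subsequence of the
(position-labelled) stream spelling an accepted run of the automaton of `P`, i.e.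
starting at the start type, ending at the end type, with each consecutive pair of types
connected by a transition (`predTypes`). -/
def FinishedTrend {T : Type*} (pred : T → Finset T) (startT endT : T)
    (stream tr : List (ℕ × T)) : Prop :=
  tr.Sublist stream ∧ (tr.map Prod.snd).head? = some startT ∧
    (tr.map Prod.snd).getLast? = some endT ∧
    (tr.map Prod.snd).Chain' (fun a b => a ∈ pred b)

/-!
After processing a prefix `w` of the stream, the counter of every type `E` equals the number of
subsequences of `w` (counted by position) that are partial runs ending in `E`. Appending an event
of type `a` creates exactly the partial runs that end with this new event: the one-event run if
`a` is the start type, and each partial run ending in a predecessor type of `a`, extended by the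
event. Their number is `e.count`, which is added to `a.count` and to no other counter.
-/

namespace List

variable {α β : Type*}

theorem countP_or_of_disjoint {p q : α → Bool} (l : List α) (h : ∀ a ∈ l, ¬(p a ∧ q a)) :
    l.countP (fun a => p a || q a) = l.countP p + l.countP q := by
  induction l with
  | nil => rfl
  | cons a l ih =>
    simp only [countP_cons, ih fun b hb => h b (mem_cons_of_mem a hb)]
    have hdisj := h a mem_cons_self
    revert hdisj
    cases p a <;> cases q a <;> simp <;> omega

theorem countP_exists_mem_eq_sum (l : List α) (s : Finset β) (P : β → α → Prop)
    (hP : ∀ a b b', P b a → P b' a → b = b') :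
    l.countP (fun a => decide (∃ b ∈ s, P b a)) = ∑ b ∈ s, l.countP (fun a => decide (P b a)) := by
  induction l with
  | nil => simp
  | cons a l ih =>
    simp only [countP_cons, ih, Finset.sum_add_distrib, decide_eq_true_eq]
    congr 1
    by_cases h : ∃ b ∈ s, P b a
    · obtain ⟨b, hb, hPb⟩ := h
      have hiff : ∀ b', P b' a ↔ b' = b := fun b' => ⟨fun h' => hP a b' b h' hPb, (· ▸ hPb)⟩
      simp only [hiff, Finset.sum_ite_eq', hb, if_true]
      exact if_pos ⟨b, hb, rfl⟩
    · push Not at h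
      rw [if_neg (by simpa using h)]
      exact (Finset.sum_eq_zero fun b hb => if_neg (h b hb)).symm

theorem countP_isEmpty_sublists (l : List α) : l.sublists.countP isEmpty = 1 := by
  induction l using reverseRecOn with
  | nil => rfl
  | append_singleton l a ih =>
    rw [sublists_concat, countP_append, ih, countP_map, countP_eq_zero.2]
    simp

end List

section PartialRun

variable {T : Type*} (pred : T → Finset T) (startT : T)

-- The paper's partial trends, read off their sequence of event types; positions are accounted
-- for by `List.sublists`, which lists subsequences with multiplicity.

def IsPartialRun (E : T) (w : List T) : Prop :=
  w.head? = some startT ∧ w.IsChain (fun a b => a ∈ pred b) ∧ w.getLast? = some E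

variable {pred startT}

theorem IsPartialRun.ne_nil {E : T} {w : List T} (h : IsPartialRun pred startT E w) : w ≠ [] := by
  rintro rfl
  simp [IsPartialRun] at h

theorem IsPartialRun.unique {E E' : T} {w : List T} (h : IsPartialRun pred startT E w)
    (h' : IsPartialRun pred startT E' w) : E = E' :=
  Option.some_injective _ (h.2.2.symm.trans h'.2.2)

theorem isPartialRun_concat {E a : T} {u : List T} :
    IsPartialRun pred startT E (u ++ [a]) ↔
      E = a ∧ ((u = [] ∧ a = startT) ∨ ∃ E' ∈ pred a, IsPartialRun pred startT E' u) := by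
  rcases u.eq_nil_or_concat with rfl | ⟨v, c, rfl⟩
  · simp [IsPartialRun, eq_comm, and_comm]
  · simp only [IsPartialRun, List.concat_eq_append, List.append_assoc, List.cons_append,
      List.nil_append, List.head?_append, List.head?_cons, Option.or_some, Option.some.injEq,
      List.isChain_append, List.isChain_cons_cons, List.IsChain.singleton, and_true,
      Option.mem_def, forall_eq', List.getLast?_append, List.getLast?_cons_cons,
      List.getLast?_singleton, Option.some_or, List.append_eq_nil_iff, List.cons_ne_self,
      and_false, false_and, true_and, existsAndEq, false_or]
    tauto

variable [DecidableEq T]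

theorem countP_isPartialRun_sublists_concat (E a : T) (u : List T) :
    (u ++ [a]).sublists.countP (fun w => decide (IsPartialRun pred startT E w)) =
      u.sublists.countP (fun w => decide (IsPartialRun pred startT E w)) +
        if E = a then
          (∑ E' ∈ pred a, u.sublists.countP (fun w => decide (IsPartialRun pred startT E' w))) +
            if a = startT then 1 else 0
        else 0 := by
  rw [List.sublists_concat, List.countP_append, List.countP_map]
  congr 1
  by_cases hE : E = a
  · subst hE
    rw [if_pos rfl, add_comm]
    have hnil : u.sublists.countP (fun w => decide (w = [] ∧ E = startT)) =
        if E = startT then 1 else 0 := by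
      by_cases hs : E = startT
      · rw [if_pos hs, ← u.countP_isEmpty_sublists]
        exact List.countP_congr fun w _ => by simp [hs, List.isEmpty_iff]
      · simp [hs]
    calc _ = u.sublists.countP (fun w => decide (w = [] ∧ E = startT) ||
          decide (∃ E' ∈ pred E, IsPartialRun pred startT E' w)) :=
          List.countP_congr fun w _ => by simp [isPartialRun_concat]
      _ = _ := by
        rw [List.countP_or_of_disjoint _ fun w _ h => ?_, hnil,
          List.countP_exists_mem_eq_sum _ _ (IsPartialRun pred startT) fun _ _ _ => IsPartialRun.unique]
        simp only [decide_eq_true_eq] at h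
        obtain ⟨⟨rfl, -⟩, E', -, hrun⟩ := h
        exact hrun.ne_nil rfl
  · rw [if_neg hE]
    exact List.countP_eq_zero.2 fun w _ => by simp [isPartialRun_concat, hE]

theorem stepType_apply (counts : T → ℕ) (a E : T) :
    stepType pred startT counts a E =
      counts E + if E = a then (∑ E' ∈ pred a, counts E') + if a = startT then 1 else 0 else 0 := by
  by_cases hE : E = a
  · subst hE
    simp [stepType]
  · simp [stepType, hE]

theorem foldl_stepType_eq_countP_isPartialRun (w : List T) (E : T) :
    w.foldl (stepType pred startT) (fun _ => 0) E =
      w.sublists.countP (fun u => decide (IsPartialRun pred startT E u)) := by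
  induction w using List.reverseRecOn generalizing E with
  | nil => simp [IsPartialRun]
  | append_singleton u a ih =>
    rw [List.foldl_concat, stepType_apply, countP_isPartialRun_sublists_concat]
    simp only [ih]

end PartialRun

/-- Correctness of type-grained counting: after processing the stream event by event,
the counter of the end type equals the number of finished trends matched by the pattern
in the stream. -/
theorem stmt10 {T : Type*} [DecidableEq T] (pred : T → Finset T) (startT endT : T)
    (stream : List T) :
    stream.foldl (stepType pred startT) (fun _ => 0) endT =
      (stream.zipIdx.map Prod.swap).sublists.countP
        (fun tr => decide (FinishedTrend pred startT endT (stream.zipIdx.map Prod.swap) tr)) := by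
  set events := stream.zipIdx.map Prod.swap
  have htypes : events.map Prod.snd = stream := by
    rw [List.map_map]
    exact List.zipIdx_map_fst 0 stream
  calc _ = stream.sublists.countP (fun u => decide (IsPartialRun pred startT endT u)) :=
        foldl_stepType_eq_countP_isPartialRun stream endT
    _ = events.sublists.countP (fun tr => decide (IsPartialRun pred startT endT (tr.map Prod.snd))) := by
        rw [← htypes, List.sublists_map, List.countP_map]
        rfl
    _ = _ := List.countP_congr fun tr htr => by
        rw [decide_eq_true_iff, decide_eq_true_iff]
        exact ⟨fun ⟨hs, hc, he⟩ => ⟨List.mem_sublists.1 htr, hs, he, hc⟩,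
          fun ⟨_, hs, he, hc⟩ => ⟨hs, hc, he⟩⟩
end

section
/- Mixed-grained counting correctness: for a query under skip-till-any-match where adjacency predicates θ only constrain pairs (e_p, e) with e_p of a type in T_e, the recurrence e.count = Σ_{E' ∈ T_t ∩ predTypes(E)} E'.count + Σ_{e_p of type in T_e ∩ predTypes(E), θ(e_p,e)} e_p.count (+1 if E = start(P)) computes for each event e the number of (partial) trends ending at e, and the resulting final count equals the number of finished trends. -/
attribute [local instance] Classical.propDecidable

/-- Adjacency of events `(e_p, e)` (events are position-type pairs): `e_p`'s type is a
predecessor type of `e`'s type, `e_p` is earlier than `e`, and the adjacency predicate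
`θ` holds whenever `e_p`'s type lies in `Te` (θ only constrains pairs whose earlier
member has a type in `Te`). -/
def Adj {T : Type*} (pred : T → Finset T) (Te : Finset T)
    (θ : ℕ × T → ℕ × T → Bool) (ep e : ℕ × T) : Prop :=
  ep.2 ∈ pred e.2 ∧ ep.1 < e.1 ∧ (ep.2 ∈ Te → θ ep e = true)

/-- A partial trend ending at event `e`: a subsequence of the stream starting at the
start type, with each consecutive pair of chosen events adjacent, whose last event is `e`. -/
def PartialEndingAt {T : Type*} (pred : T → Finset T) (Te : Finset T)
    (θ : ℕ × T → ℕ × T → Bool) (startT : T)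
    (stream tr : List (ℕ × T)) (e : ℕ × T) : Prop :=
  tr.Sublist stream ∧ (tr.map Prod.snd).head? = some startT ∧
    tr.Chain' (Adj pred Te θ) ∧ tr.getLast? = some e

/-- A finished trend: a subsequence of the stream spelling a run of the automaton of the
pattern from the start type to the end type, each consecutive pair adjacent. -/
def FinishedM {T : Type*} (pred : T → Finset T) (Te : Finset T)
    (θ : ℕ × T → ℕ × T → Bool) (startT endT : T)
    (stream tr : List (ℕ × T)) : Prop :=
  tr.Sublist stream ∧ (tr.map Prod.snd).head? = some startT ∧
    (tr.map Prod.snd).getLast? = some endT ∧ tr.Chain' (Adj pred Te θ)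

/-- State of the mixed-grained algorithm: type-grained counters for the types in `T_t`
(the complement of `Te`), event-grained counters for the stored events of types in `Te`,
and the final count. -/
structure MState (T : Type*) where
  typeCounts : T → ℕ
  eventCounts : List ((ℕ × T) × ℕ)
  final : ℕ

/-- The intermediate count of a new event `e`:
`e.count = Σ_{E' ∈ T_t ∩ predTypes(E)} E'.count
 + Σ_{e_p of type in T_e ∩ predTypes(E), θ(e_p,e)} e_p.count (+1 if E = start(P))`. -/
def ecOf {T : Type*} [DecidableEq T] (pred : T → Finset T) (Te : Finset T)
    (θ : ℕ × T → ℕ × T → Bool) (startT : T) (s : MState T) (e : ℕ × T) : ℕ :=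
  (∑ E' ∈ (pred e.2).filter (fun E' => E' ∉ Te), s.typeCounts E') +
    ((s.eventCounts.filter
        (fun p => decide (p.1.2 ∈ pred e.2) && θ p.1 e)).map Prod.snd).sum +
    (if e.2 = startT then 1 else 0)

/-- One step of the mixed-grained counting algorithm. -/
def stepM {T : Type*} [DecidableEq T] (pred : T → Finset T) (Te : Finset T)
    (θ : ℕ × T → ℕ × T → Bool) (startT endT : T) (s : MState T) (e : ℕ × T) :
    MState T :=
  let ec := ecOf pred Te θ startT s e
  { typeCounts := if e.2 ∈ Te then s.typeCounts
      else Function.update s.typeCounts e.2 (s.typeCounts e.2 + ec)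
    eventCounts := if e.2 ∈ Te then (e, ec) :: s.eventCounts else s.eventCounts
    final := if e.2 = endT then s.final + ec else s.final }

/-
Write `e.count` for the value of the recurrence at `e` once a prefix `L` of the stream has been
processed, and `N_L(e)` for the number of partial trends ending at `e` whose other events are drawn
from `L` (`trendCount`). When `L` grows by an event `x` earlier than `e`, both grow by the same
amount, `x.count` resp. `N_L(x)`, exactly when `(x, e)` is adjacent: a trend passing through `x`
into `e` is a trend ending at `x` extended by `e`, and the algorithm either stores `x` with its
count (`x.type ∈ T_e`, where adjacency is `θ`) or adds that count to the counter of its type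
(`x.type ∈ T_t`, where adjacency only asks for a predecessor type). Induction along the stream
gives `e.count = N_L(e)`, and the final count and the number of finished trends both grow by this
quantity at every event of end type.
-/

section Trends

variable {T : Type*} (pred : T → Finset T) (Te : Finset T) (θ : ℕ × T → ℕ × T → Bool)
  (startT endT : T)

def IsPartialTrend (tr : List (ℕ × T)) : Prop :=
  (tr.map Prod.snd).head? = some startT ∧ tr.IsChain (Adj pred Te θ)

noncomputable def trendCount (L : List (ℕ × T)) (e : ℕ × T) : ℕ :=
  L.sublists.countP fun tr => decide (IsPartialTrend pred Te θ startT (tr ++ [e]))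

noncomputable def finishedCount (L : List (ℕ × T)) : ℕ :=
  L.sublists.countP fun tr =>
    decide (IsPartialTrend pred Te θ startT tr ∧ (tr.map Prod.snd).getLast? = some endT)

variable {pred Te θ startT endT}

theorem isPartialTrend_singleton (e : ℕ × T) :
    IsPartialTrend pred Te θ startT [e] ↔ e.2 = startT := by
  simp [IsPartialTrend]

theorem isPartialTrend_concat_concat (tr : List (ℕ × T)) (x e : ℕ × T) :
    IsPartialTrend pred Te θ startT (tr ++ [x] ++ [e]) ↔
      IsPartialTrend pred Te θ startT (tr ++ [x]) ∧ Adj pred Te θ x e := by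
  rw [IsPartialTrend, IsPartialTrend, List.isChain_append (l₁ := tr ++ [x])]
  simp [and_assoc]

theorem trendCount_nil [DecidableEq T] (e : ℕ × T) :
    trendCount pred Te θ startT [] e = if e.2 = startT then 1 else 0 := by
  simp [trendCount, isPartialTrend_singleton]

theorem trendCount_concat (L : List (ℕ × T)) (x e : ℕ × T) :
    trendCount pred Te θ startT (L ++ [x]) e =
      trendCount pred Te θ startT L e +
        if Adj pred Te θ x e then trendCount pred Te θ startT L x else 0 := by
  rw [trendCount, trendCount, List.sublists_concat, List.countP_append, List.countP_map]
  congr 1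
  split_ifs with hxe
  · exact List.countP_congr fun tr _ => by
      simp only [Function.comp_apply, isPartialTrend_concat_concat, hxe, and_true]
  · exact List.countP_eq_zero.2 fun tr _ => by
      simp only [Function.comp_apply, isPartialTrend_concat_concat, hxe, and_false,
        decide_false, Bool.false_eq_true, not_false_eq_true]

theorem finishedCount_nil : finishedCount pred Te θ startT endT [] = 0 := by
  simp [finishedCount, IsPartialTrend]

theorem finishedCount_concat [DecidableEq T] (L : List (ℕ × T)) (x : ℕ × T) :
    finishedCount pred Te θ startT endT (L ++ [x]) =
      finishedCount pred Te θ startT endT L +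
        if x.2 = endT then trendCount pred Te θ startT L x else 0 := by
  rw [finishedCount, finishedCount, List.sublists_concat, List.countP_append, List.countP_map]
  congr 1
  split_ifs with hx
  · exact List.countP_congr fun tr _ => by
      simp only [Function.comp_apply, List.map_append, List.map_cons, List.map_nil,
        List.getLast?_concat, hx, and_true]
  · exact List.countP_eq_zero.2 fun tr _ => by
      simp only [Function.comp_apply, List.map_append, List.map_cons, List.map_nil,
        List.getLast?_concat, Option.some_inj, hx, and_false, decide_false, Bool.false_eq_true,
        not_false_eq_true]

theorem countP_partialEndingAt_concat {L : List (ℕ × T)} {e : ℕ × T} (he : e ∉ L) :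
    (L ++ [e]).sublists.countP
        (fun tr => decide (PartialEndingAt pred Te θ startT (L ++ [e]) tr e)) =
      trendCount pred Te θ startT L e := by
  rw [List.sublists_concat, List.countP_append, List.countP_map, trendCount]
  have hnone : L.sublists.countP
      (fun tr => decide (PartialEndingAt pred Te θ startT (L ++ [e]) tr e)) = 0 :=
    List.countP_eq_zero.2 fun tr htr h => by
      obtain ⟨-, -, -, hlast⟩ := of_decide_eq_true h
      exact he ((List.mem_sublists.1 htr).subset (List.mem_of_getLast? hlast))
  rw [hnone, zero_add]
  refine List.countP_congr fun tr htr => ?_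
  simp only [Function.comp_apply, decide_eq_true_iff]
  simp only [PartialEndingAt, IsPartialTrend, List.getLast?_concat, and_true]
  exact ⟨fun h => h.2, fun h => ⟨(List.mem_sublists.1 htr).append (List.Sublist.refl _), h⟩⟩

theorem countP_finishedM (L : List (ℕ × T)) :
    L.sublists.countP (fun tr => decide (FinishedM pred Te θ startT endT L tr)) =
      finishedCount pred Te θ startT endT L :=
  List.countP_congr fun tr htr => by
    simp only [decide_eq_true_iff]
    simp only [FinishedM, IsPartialTrend, List.mem_sublists.1 htr, true_and]
    tauto

end Trends

section Algorithm

variable {T : Type*} [DecidableEq T] {pred : T → Finset T} {Te : Finset T}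
  {θ : ℕ × T → ℕ × T → Bool} {startT endT : T}

theorem ecOf_init (e : ℕ × T) :
    ecOf pred Te θ startT ⟨fun _ => 0, [], 0⟩ e = if e.2 = startT then 1 else 0 := by
  simp [ecOf]

theorem ecOf_stepM (s : MState T) {x e : ℕ × T} (hxe : x.1 < e.1) :
    ecOf pred Te θ startT (stepM pred Te θ startT endT s x) e =
      ecOf pred Te θ startT s e +
        if Adj pred Te θ x e then ecOf pred Te θ startT s x else 0 := by
  simp only [stepM]
  generalize ecOf pred Te θ startT s x = c
  by_cases hx : x.2 ∈ Te
  · have hadj : Adj pred Te θ x e ↔ x.2 ∈ pred e.2 ∧ θ x e = true := by simp [Adj, hxe, hx]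
    simp only [hx, if_true, ecOf, List.filter_cons, hadj, Bool.and_eq_true, decide_eq_true_eq]
    split_ifs <;> simp only [List.map_cons, List.sum_cons] <;> omega
  · have hadj : Adj pred Te θ x e ↔ x.2 ∈ pred e.2 := by simp [Adj, hxe, hx]
    have hupd : ∀ E', Function.update s.typeCounts x.2 (s.typeCounts x.2 + c) E' =
        s.typeCounts E' + if E' = x.2 then c else 0 := by
      intro E'
      rw [Function.update_apply]
      split_ifs with h <;> simp [h]
    simp only [hx, if_false, ecOf, hadj, hupd, Finset.sum_add_distrib, Finset.sum_ite_eq',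
      Finset.mem_filter, not_false_eq_true, and_true]
    omega

theorem final_stepM (s : MState T) (x : ℕ × T) :
    (stepM pred Te θ startT endT s x).final =
      s.final + if x.2 = endT then ecOf pred Te θ startT s x else 0 := by
  by_cases hx : x.2 = endT <;> simp [stepM, hx]

theorem ecOf_foldl_stepM {L : List (ℕ × T)} (hL : L.Pairwise (·.1 < ·.1)) {e : ℕ × T}
    (he : ∀ y ∈ L, y.1 < e.1) :
    ecOf pred Te θ startT (L.foldl (stepM pred Te θ startT endT) ⟨fun _ => 0, [], 0⟩) e =
      trendCount pred Te θ startT L e := by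
  induction L using List.reverseRecOn generalizing e with
  | nil => rw [List.foldl_nil, ecOf_init, trendCount_nil]
  | append_singleton L x ih =>
    obtain ⟨hL, -, hLx⟩ := List.pairwise_append.1 hL
    rw [List.foldl_concat, ecOf_stepM _ (he x (by simp)), trendCount_concat,
      ih hL fun y hy => he y (by simp [hy]), ih hL fun y hy => hLx y hy x (by simp)]

theorem final_foldl_stepM {L : List (ℕ × T)} (hL : L.Pairwise (·.1 < ·.1)) :
    (L.foldl (stepM pred Te θ startT endT) ⟨fun _ => 0, [], 0⟩).final =
      finishedCount pred Te θ startT endT L := by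
  induction L using List.reverseRecOn with
  | nil => rw [List.foldl_nil, finishedCount_nil]
  | append_singleton L x ih =>
    obtain ⟨hL, -, hLx⟩ := List.pairwise_append.1 hL
    rw [List.foldl_concat, final_stepM, ih hL, finishedCount_concat,
      ecOf_foldl_stepM hL fun y hy => hLx y hy x (by simp)]

theorem ecOf_foldl_stepM_eq_countP_partialEndingAt {L : List (ℕ × T)} {e : ℕ × T}
    (h : (L ++ [e]).Pairwise (·.1 < ·.1)) :
    ecOf pred Te θ startT (L.foldl (stepM pred Te θ startT endT) ⟨fun _ => 0, [], 0⟩) e =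
      (L ++ [e]).sublists.countP
        (fun tr => decide (PartialEndingAt pred Te θ startT (L ++ [e]) tr e)) := by
  obtain ⟨hL, -, hLe⟩ := List.pairwise_append.1 h
  have he : ∀ y ∈ L, y.1 < e.1 := fun y hy => hLe y hy e (List.mem_singleton_self e)
  rw [ecOf_foldl_stepM hL he, countP_partialEndingAt_concat fun h => lt_irrefl _ (he e h)]

end Algorithm

theorem List.pairwise_fst_lt_mapIdx_prod {α : Type*} (l : List α) :
    (l.mapIdx fun i a => (i, a)).Pairwise (·.1 < ·.1) := by
  rw [List.pairwise_iff_getElem]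
  intro i j _ _ hij
  simpa using hij

/-- Mixed-grained counting correctness (skip-till-any-match with adjacency predicates):
the recurrence computes for each event `e` the number of (partial) trends ending at `e`,
and the resulting final count equals the number of finished trends. -/
theorem stmt14 {T : Type*} [DecidableEq T] (pred : T → Finset T) (Te : Finset T)
    (θ : ℕ × T → ℕ × T → Bool) (startT endT : T) (stream : List T) :
    (∀ i (h : i < (stream.mapIdx fun i a => (i, a)).length),
      ecOf pred Te θ startT
          (((stream.mapIdx fun i a => (i, a)).take i).foldl (stepM pred Te θ startT endT)
            ⟨fun _ => 0, [], 0⟩) (stream.mapIdx fun i a => (i, a))[i] =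
        ((stream.mapIdx fun i a => (i, a)).take (i + 1)).sublists.countP
          (fun tr => decide (PartialEndingAt pred Te θ startT
            ((stream.mapIdx fun i a => (i, a)).take (i + 1)) tr (stream.mapIdx fun i a => (i, a))[i]))) ∧
    ((stream.mapIdx fun i a => (i, a)).foldl (stepM pred Te θ startT endT) ⟨fun _ => 0, [], 0⟩).final =
      (stream.mapIdx fun i a => (i, a)).sublists.countP
        (fun tr => decide (FinishedM pred Te θ startT endT (stream.mapIdx fun i a => (i, a)) tr)) := by
  have hpw := List.pairwise_fst_lt_mapIdx_prod stream
  refine ⟨fun i hi => ?_, ?_⟩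
  · rw [← List.take_concat_get' _ i hi]
    exact ecOf_foldl_stepM_eq_countP_partialEndingAt
      (List.take_concat_get' _ i hi ▸ hpw.sublist (List.take_sublist _ _))
  · rw [final_foldl_stepM hpw, countP_finishedM]
end
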